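/- arXiv:1708.01914 — 3 statements merged into one kernel-verified Lean document; each statement's English description precedes it below -/
import Mathlib

section
/- Let (P_m)_{m≥0} be real polynomials with deg P_m = m for each m, and set ψ_m(x) = P_m(x)e^x. Assume the functions (ψ_m) are orthonormal in L²(0,1). Then for every integer k ≥ 0, the inner product of the derivative ψ_k' with ψ_k satisfies [ψ_k', ψ_k] = ∫₀¹ ψ_k'(x) ψ_k(x) dx = 1. -/
open Polynomial MeasureTheory

/-- If `ψ_m(x) = P_m(x) e^x` with `deg P_m = m` are orthonormal in `L²(0,1)`, then
`[ψ_k', ψ_k] = ∫₀¹ ψ_k'(x) ψ_k(x) dx = 1` for every `k`. -/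
theorem stmt4 (P : ℕ → Polynomial ℝ) (hdeg : ∀ m : ℕ, (P m).degree = m)
    (horth : ∀ k m : ℕ,
      (∫ x in Set.Ioo (0:ℝ) 1,
        ((P k).eval x * Real.exp x) * ((P m).eval x * Real.exp x))
        = if k = m then 1 else 0) :
    ∀ k : ℕ,
      (∫ x in Set.Ioo (0:ℝ) 1,
        (((P k).eval x + (Polynomial.derivative (P k)).eval x) * Real.exp x) *
          ((P k).eval x * Real.exp x)) = 1 := by
  intro k
  have hPne : ∀ m : ℕ, P m ≠ 0 := by
    intro m h
    have := hdeg m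
    rw [h, Polynomial.degree_zero] at this
    exact absurd this.symm (by simp)
  have hint : ∀ Q R : Polynomial ℝ, IntegrableOn
      (fun x => (Q.eval x * Real.exp x) * (R.eval x * Real.exp x)) (Set.Ioo (0:ℝ) 1) := by
    intro Q R
    have hc : Continuous fun x : ℝ => (Q.eval x * Real.exp x) * (R.eval x * Real.exp x) :=
      ((Q.continuous_aeval.mul Real.continuous_exp).mul
        (R.continuous_aeval.mul Real.continuous_exp))
    exact (hc.continuousOn.integrableOn_Icc).mono_set Set.Ioo_subset_Icc_self
  -- key lemma: polynomials of degree < k are orthogonal to ψ_k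
  have key : ∀ n : ℕ, n ≤ k → ∀ R : Polynomial ℝ, R.degree < (n : ℕ) →
      (∫ x in Set.Ioo (0:ℝ) 1, (R.eval x * Real.exp x) * ((P k).eval x * Real.exp x)) = 0 := by
    intro n
    induction n with
    | zero =>
      intro _ R hR
      have : R = 0 := by
        rw [Polynomial.degree_eq_bot.symm]
        exact Nat.WithBot.lt_zero_iff.mp (by exact_mod_cast hR)
      simp [this]
    | succ n ih =>
      intro hnk R hR
      by_cases hR0 : R = 0
      · simp [hR0]
      · set m := R.natDegree with hm
        have hmn : m < n + 1 := (Polynomial.natDegree_lt_iff_degree_lt hR0).mpr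
          (by exact_mod_cast hR)
        have hmk : m < k := lt_of_lt_of_le hmn hnk
        have hPlc : (P m).leadingCoeff ≠ 0 := Polynomial.leadingCoeff_ne_zero.mpr (hPne m)
        set c : ℝ := R.leadingCoeff / (P m).leadingCoeff with hc
        set R' : Polynomial ℝ := R - Polynomial.C c * P m with hR'
        have hdegeq : R.degree = (Polynomial.C c * P m).degree := by
          rw [Polynomial.degree_C_mul (by
            rw [hc]
            exact div_ne_zero (Polynomial.leadingCoeff_ne_zero.mpr hR0) hPlc),
            hdeg m, hm]
          exact (Polynomial.degree_eq_natDegree hR0)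
        have hlceq : R.leadingCoeff = (Polynomial.C c * P m).leadingCoeff := by
          rw [Polynomial.leadingCoeff_mul, Polynomial.leadingCoeff_C, hc,
            div_mul_cancel₀ _ hPlc]
        have hR'lt : R'.degree < R.degree := Polynomial.degree_sub_lt hdegeq hR0 hlceq
        have hR'lt' : R'.degree < (n : ℕ) := by
          calc R'.degree < R.degree := hR'lt
            _ = (m : ℕ) := Polynomial.degree_eq_natDegree hR0
            _ ≤ (n : ℕ) := by exact_mod_cast Nat.lt_succ_iff.mp hmn
        have hIR' := ih (le_of_lt (Nat.lt_of_succ_le hnk)) R' hR'lt'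
        have hsplit : (fun x => (R.eval x * Real.exp x) * ((P k).eval x * Real.exp x))
            = (fun x => (R'.eval x * Real.exp x) * ((P k).eval x * Real.exp x))
              + (fun x => ((Polynomial.C c * P m).eval x * Real.exp x)
                  * ((P k).eval x * Real.exp x)) := by
          funext x
          simp only [hR', Polynomial.eval_sub, Polynomial.eval_mul, Polynomial.eval_C,
            Pi.add_apply]
          ring
        rw [show (∫ x in Set.Ioo (0:ℝ) 1, (R.eval x * Real.exp x) * ((P k).eval x * Real.exp x))
            = ∫ x in Set.Ioo (0:ℝ) 1,
              ((fun x => (R'.eval x * Real.exp x) * ((P k).eval x * Real.exp x))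
              + (fun x => ((Polynomial.C c * P m).eval x * Real.exp x)
                  * ((P k).eval x * Real.exp x))) x from by rw [← hsplit]]
        simp only [Pi.add_apply]
        rw [integral_add (hint R' (P k)) (hint (Polynomial.C c * P m) (P k))]
        have h2 : (∫ x in Set.Ioo (0:ℝ) 1,
            ((Polynomial.C c * P m).eval x * Real.exp x) * ((P k).eval x * Real.exp x)) = 0 := by
          have : (fun x => ((Polynomial.C c * P m).eval x * Real.exp x)
              * ((P k).eval x * Real.exp x))
              = fun x => c * (((P m).eval x * Real.exp x) * ((P k).eval x * Real.exp x)) := by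
            funext x; simp only [Polynomial.eval_mul, Polynomial.eval_C]; ring
          rw [this, MeasureTheory.integral_const_mul, horth m k, if_neg (Nat.ne_of_lt hmk), mul_zero]
        rw [hIR', h2, zero_add]
  -- main computation
  have hdk : (Polynomial.derivative (P k)).degree < (k : ℕ) := by
    calc (Polynomial.derivative (P k)).degree < (P k).degree :=
          Polynomial.degree_derivative_lt (hPne k)
      _ = (k : ℕ) := hdeg k
  have hd0 := key k le_rfl (Polynomial.derivative (P k)) hdk
  have hsplit : (fun x => (((P k).eval x + (Polynomial.derivative (P k)).eval x) * Real.exp x)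
        * ((P k).eval x * Real.exp x))
      = (fun x => ((P k).eval x * Real.exp x) * ((P k).eval x * Real.exp x))
        + (fun x => ((Polynomial.derivative (P k)).eval x * Real.exp x)
            * ((P k).eval x * Real.exp x)) := by
    funext x; simp only [Pi.add_apply]; ring
  rw [show (∫ x in Set.Ioo (0:ℝ) 1,
        (((P k).eval x + (Polynomial.derivative (P k)).eval x) * Real.exp x)
          * ((P k).eval x * Real.exp x))
      = ∫ x in Set.Ioo (0:ℝ) 1,
        ((fun x => ((P k).eval x * Real.exp x) * ((P k).eval x * Real.exp x))
        + (fun x => ((Polynomial.derivative (P k)).eval x * Real.exp x)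
            * ((P k).eval x * Real.exp x))) x from by rw [← hsplit]]
  simp only [Pi.add_apply]
  rw [integral_add (hint (P k) (P k)) (hint (Polynomial.derivative (P k)) (P k))]
  rw [hd0, horth k k, if_pos rfl, add_zero]
end

section
/- Let (P_m)_{m≥0} be real polynomials with deg P_m = m for each m, and set ψ_m(x) = P_m(x)e^x. Assume the functions (ψ_m) are orthonormal in L²(0,1). For an integer N > 1, define the N×N real matrix M_N with entries a_{mk} = [ψ_k', ψ_m] = ∫₀¹ ψ_k'(x) ψ_m(x) dx for k, m = 0, ..., N−1. Then det(M_N) = 1; in particular M_N is invertible. -/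
open Polynomial

lemma repr_aux (P : ℕ → Polynomial ℝ) (hdeg : ∀ m : ℕ, (P m).degree = m) :
    ∀ (k : ℕ) (Q : Polynomial ℝ), Q.degree ≤ (k : ℕ) →
      ∃ c : ℕ → ℝ, Q = ∑ j ∈ Finset.range (k+1), c j • P j ∧
        c k = Q.coeff k / (P k).coeff k := by
  have hlc : ∀ k : ℕ, (P k).coeff k ≠ 0 := by
    intro k
    have hnd : (P k).natDegree = k := natDegree_eq_of_degree_eq_some (hdeg k)
    have hne : P k ≠ 0 := by
      intro h
      have h2 := hdeg k
      rw [h, degree_zero] at h2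
      simp at h2
    have h3 := leadingCoeff_ne_zero.mpr hne
    rwa [leadingCoeff, hnd] at h3
  intro k
  induction k with
  | zero =>
    intro Q hQ
    refine ⟨fun _ => Q.coeff 0 / (P 0).coeff 0, ?_, rfl⟩
    have hQ0 : Q = Polynomial.C (Q.coeff 0) := eq_C_of_degree_le_zero (by simpa using hQ)
    have hP0 : P 0 = Polynomial.C ((P 0).coeff 0) :=
      eq_C_of_degree_le_zero (le_of_eq (by simpa using hdeg 0))
    rw [Finset.sum_range_one]
    set a := (P 0).coeff 0 with ha
    rw [hP0, Polynomial.smul_C, smul_eq_mul, div_mul_cancel₀ _ (hlc 0)]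
    exact hQ0
  | succ k ih =>
    intro Q hQ
    set t := Q.coeff (k+1) / (P (k+1)).coeff (k+1) with ht
    set R := Q - Polynomial.C t * P (k+1) with hR
    have hRdeg : R.degree ≤ (k : ℕ) := by
      rw [degree_le_iff_coeff_zero]
      intro m hm
      have hm' : k + 1 ≤ m := by exact_mod_cast Nat.add_one_le_iff.mpr (by exact_mod_cast hm)
      rcases eq_or_lt_of_le hm' with h | h
      · subst h
        simp only [hR, coeff_sub, coeff_C_mul, ht]
        rw [div_mul_cancel₀ _ (hlc (k+1)), sub_self]
      · have h1 : Q.coeff m = 0 := coeff_eq_zero_of_degree_lt (lt_of_le_of_lt hQ (by exact_mod_cast h))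
        have h2 : (P (k+1)).coeff m = 0 := coeff_eq_zero_of_degree_lt (by rw [hdeg]; exact_mod_cast h)
        simp [hR, h1, h2]
    obtain ⟨c, hc, -⟩ := ih R hRdeg
    refine ⟨Function.update c (k+1) t, ?_, by simp⟩
    rw [Finset.sum_range_succ, Function.update_self]
    have heq : ∑ j ∈ Finset.range (k+1), Function.update c (k+1) t j • P j
        = ∑ j ∈ Finset.range (k+1), c j • P j := by
      apply Finset.sum_congr rfl
      intro j hj
      have := Finset.mem_range.mp hj
      rw [Function.update_of_ne (by omega : j ≠ k+1)]
    rw [heq, ← hc, hR, smul_eq_C_mul]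
    ring
open Polynomial MeasureTheory

lemma hlc_aux (P : ℕ → Polynomial ℝ) (hdeg : ∀ m : ℕ, (P m).degree = m) (k : ℕ) :
    (P k).coeff k ≠ 0 := by
  have hnd : (P k).natDegree = k := natDegree_eq_of_degree_eq_some (hdeg k)
  have hne : P k ≠ 0 := by
    intro h
    have h2 := hdeg k
    rw [h, degree_zero] at h2
    simp at h2
  have h3 := leadingCoeff_ne_zero.mpr hne
  rwa [leadingCoeff, hnd] at h3

/-- If `ψ_m(x) = P_m(x) e^x` with `deg P_m = m` are orthonormal in `L²(0,1)`, and
`M_N` is the `N×N` matrix with entries `a_{mk} = ∫₀¹ ψ_k'(x) ψ_m(x) dx`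
(`m` the row index, `k` the column index), then `det M_N = 1` and `M_N` is
invertible. -/
theorem stmt6 (N : ℕ) (hN : 1 < N)
    (P : ℕ → Polynomial ℝ) (hdeg : ∀ m : ℕ, (P m).degree = m)
    (horth : ∀ k m : ℕ,
      (∫ x in Set.Ioo (0:ℝ) 1,
        ((P k).eval x * Real.exp x) * ((P m).eval x * Real.exp x))
        = if k = m then 1 else 0)
    (M : Matrix (Fin N) (Fin N) ℝ)
    (hM : ∀ m k : Fin N, M m k =
      ∫ x in Set.Ioo (0:ℝ) 1,
        (((P (k : ℕ)).eval x + (Polynomial.derivative (P (k : ℕ))).eval x) * Real.exp x) *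
          ((P (m : ℕ)).eval x * Real.exp x)) :
    M.det = 1 ∧ IsUnit M := by
  have hne : ∀ k : ℕ, P k ≠ 0 := by
    intro k h
    have h2 := hdeg k
    rw [h, degree_zero] at h2
    simp at h2
  have hint : ∀ p q : Polynomial ℝ, IntegrableOn
      (fun x => p.eval x * Real.exp x * (q.eval x * Real.exp x)) (Set.Ioo (0:ℝ) 1) := by
    intro p q
    have hc : Continuous (fun x => p.eval x * Real.exp x * (q.eval x * Real.exp x)) := by fun_prop
    exact (hc.integrableOn_Icc (a := 0) (b := 1)).mono_set Set.Ioo_subset_Icc_self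
  have main : ∀ k : Fin N, ∃ c : ℕ → ℝ, c (k : ℕ) = 1 ∧
      ∀ m : Fin N, M m k = if (m : ℕ) < (k : ℕ) + 1 then c (m : ℕ) else 0 := by
    intro k
    set Q : Polynomial ℝ := P (k : ℕ) + Polynomial.derivative (P (k : ℕ)) with hQdef
    have hQdeg : Q.degree ≤ ((k : ℕ) : WithBot ℕ) :=
      le_trans (degree_add_le _ _) (max_le (le_of_eq (hdeg _))
        (le_trans (degree_derivative_le) (le_of_eq (hdeg _))))
    obtain ⟨c, hc, hck⟩ := repr_aux P hdeg (k : ℕ) Q hQdeg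
    have hdercoeff : (Polynomial.derivative (P (k : ℕ))).coeff (k : ℕ) = 0 :=
      coeff_eq_zero_of_degree_lt (by
        have := degree_derivative_lt (hne (k : ℕ))
        rwa [hdeg] at this)
    have hck1 : c (k : ℕ) = 1 := by
      rw [hck, hQdef, coeff_add, hdercoeff, add_zero, div_self (hlc_aux P hdeg _)]
    refine ⟨c, hck1, ?_⟩
    intro m
    rw [hM m k]
    have hev : ∀ x : ℝ, (P (k : ℕ)).eval x + (Polynomial.derivative (P (k : ℕ))).eval x
        = ∑ j ∈ Finset.range ((k : ℕ) + 1), c j * (P j).eval x := by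
      intro x
      rw [← eval_add, ← hQdef, hc]
      simp [eval_finset_sum]
    have hsplit : (∫ x in Set.Ioo (0:ℝ) 1,
          ((P (k : ℕ)).eval x + (Polynomial.derivative (P (k : ℕ))).eval x) * Real.exp x *
            ((P (m : ℕ)).eval x * Real.exp x))
        = ∑ j ∈ Finset.range ((k : ℕ) + 1), ∫ x in Set.Ioo (0:ℝ) 1,
            c j * ((P j).eval x * Real.exp x * ((P (m : ℕ)).eval x * Real.exp x)) := by
      rw [← MeasureTheory.integral_finset_sum]
      · refine MeasureTheory.integral_congr_ae (Filter.Eventually.of_forall fun x => ?_)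
        dsimp only
        rw [hev x, Finset.sum_mul, Finset.sum_mul]
        apply Finset.sum_congr rfl
        intro j _
        ring
      · intro j _
        exact (hint (P j) (P (m : ℕ))).const_mul (c j)
    rw [hsplit]
    have hterm : ∀ j ∈ Finset.range ((k : ℕ) + 1),
        (∫ x in Set.Ioo (0:ℝ) 1,
          c j * ((P j).eval x * Real.exp x * ((P (m : ℕ)).eval x * Real.exp x)))
        = if j = (m : ℕ) then c j else 0 := by
      intro j _
      rw [MeasureTheory.integral_const_mul, horth j (m : ℕ)]
      split <;> simp
    rw [Finset.sum_congr rfl hterm, Finset.sum_ite_eq' (Finset.range ((k : ℕ) + 1))]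
    simp [Finset.mem_range]
  have htri : M.BlockTriangular id := by
    intro i j hij
    obtain ⟨c, -, hc2⟩ := main j
    rw [hc2 i, if_neg]
    have : (j : ℕ) < (i : ℕ) := hij
    omega
  have hdet : M.det = 1 := by
    rw [Matrix.det_of_upperTriangular htri]
    apply Finset.prod_eq_one
    intro i _
    obtain ⟨c, hc1, hc2⟩ := main i
    rw [hc2 i, if_pos (by omega), hc1]
  exact ⟨hdet, by rw [Matrix.isUnit_iff_isUnit_det, hdet]; exact isUnit_one⟩
end

section
/- Let ε ∈ (0, 1/2]. Let f : ℝ → ℝ and χ : ℝ² → ℝ be continuous nonnegative functions with f(z) = 0 for |z| ≥ ε, χ(y) = 0 for |y| ≥ ε, and f(0)·χ(0) > 0. Then ∫_ℝ f > 0 and ∫_{ℝ²} χ > 0, and for every x₀ ∈ [0,1], every x ∈ ℝ³ with |x| ≤ 1, and every t ≥ 4, the integral u₀(x, t, x₀) = ∫_{η ∈ ℝ³, |x−η| < t} f(η₁ − x₀) χ(η₂, η₃ + 1) / (4π|x − η|) dη satisfies u₀(x, t, x₀) ≥ (1/(16π)) (∫_ℝ f)(∫_{ℝ²} χ) > 0.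 In particular, on the support of the integrand one has |x − η| < 4 ≤ t, so the ball {η : |x−η| < t} contains the full support of η ↦ f(η₁ − x₀)χ(η₂, η₃ + 1). -/
/-!
The source `f(η₁ - x₀) χ(η₂, η₃ + 1)` lives in the `ε`-neighbourhood of the point `(x₀, 0, -1)`,
hence at distance less than `4` from any `x` with `|x| ≤ 1`. On that set the kernel
`1 / (4π|x - η|)` is at least `1 / (16π)`, and by Fubini and translation invariance the integral of
the source is `(∫ f)(∫ χ)`. The singularity of the kernel at `η = x` is harmless because `|y|⁻¹`
is locally integrable in dimension `3`.
-/

open MeasureTheory Real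

section

variable {E : Type*} [NormedAddCommGroup E] [NormedSpace ℝ E] [FiniteDimensional ℝ E]
  [MeasurableSpace E] [BorelSpace E] {μ : Measure E} [μ.IsAddHaarMeasure]

theorem locallyIntegrable_inv_norm (hd : 2 ≤ Module.finrank ℝ E) :
    LocallyIntegrable (fun y : E => ‖y‖⁻¹) μ :=
  locallyIntegrable_of_norm_le_rpow (C := 1) (α := 1) (by omega) (by exact_mod_cast hd)
    (ae_of_all _ fun y => by simp [Real.rpow_neg_one])
    (continuous_norm.measurable.inv).aestronglyMeasurable

theorem locallyIntegrable_inv_dist (hd : 2 ≤ Module.finrank ℝ E) (x : E) :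
    LocallyIntegrable (fun η : E => (dist x η)⁻¹) μ := by
  have h := (locallyIntegrable_map_homeomorph (Homeomorph.subRight x) (μ := μ)).1
    (by rw [Homeomorph.coe_subRight, map_sub_right_eq_self]; exact locallyIntegrable_inv_norm hd)
  simpa [Function.comp_def, dist_eq_norm, norm_sub_rev] using h

end

theorem hasCompactSupport_of_forall_le_norm {E F : Type*} [NormedAddCommGroup E] [ProperSpace E]
    [Zero F] {g : E → F} {ε : ℝ} (h : ∀ z, ε ≤ ‖z‖ → g z = 0) : HasCompactSupport g :=
  HasCompactSupport.intro (isCompact_closedBall 0 ε) fun z hz =>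
    h z (by simpa using (not_le.1 (mt mem_closedBall_zero_iff.2 hz)).le)

theorem integral_div_le_integral_div_dist {E : Type*} [MetricSpace E] [MeasurableSpace E]
    {μ : Measure E} [NullSingletonClass μ] {g : E → ℝ} {x : E} {c R : ℝ} (hc : 0 < c)
    (hg0 : 0 ≤ g) (hgR : ∀ η, g η ≠ 0 → dist x η < R) (hg : Integrable g μ)
    (hgd : Integrable (fun η => g η / (c * dist x η)) μ) :
    (∫ η, g η ∂μ) / (c * R) ≤ ∫ η, g η / (c * dist x η) ∂μ := by
  rw [← integral_div]
  refine integral_mono_ae (hg.div_const _) hgd ?_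
  filter_upwards [μ.ae_ne x] with η hη
  by_cases h : g η = 0
  · simp [h]
  have hd : 0 < dist x η := dist_pos.2 hη.symm
  exact div_le_div_of_nonneg_left (hg0 η) (by positivity)
    (mul_le_mul_of_nonneg_left (hgR η h).le hc.le)

theorem integral_euclideanSpace_fin_three_mul (f : ℝ → ℝ) (χ : EuclideanSpace ℝ (Fin 2) → ℝ) :
    ∫ η : EuclideanSpace ℝ (Fin 3), f (η 0) * χ (WithLp.toLp 2 ![η 1, η 2])
      = (∫ z, f z) * ∫ y, χ y := by
  have hE3 :=
    ((EuclideanSpace.volume_preserving_symm_measurableEquiv_toLp (Fin 3)).symm _).integral_comp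
      (MeasurableEquiv.measurableEmbedding _)
      (fun η : EuclideanSpace ℝ (Fin 3) => f (η 0) * χ (WithLp.toLp 2 ![η 1, η 2]))
  have hsplit := ((volume_preserving_piFinSuccAbove (fun _ : Fin 3 => ℝ) 0).symm _).integral_comp
      (MeasurableEquiv.measurableEmbedding _)
      (fun v : Fin 3 → ℝ => f (v 0) * χ (WithLp.toLp 2 ![v 1, v 2]))
  have hE2 :=
    ((EuclideanSpace.volume_preserving_symm_measurableEquiv_toLp (Fin 2)).symm _).integral_comp
      (MeasurableEquiv.measurableEmbedding _) χ
  rw [← hE3]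
  change ∫ v : Fin 3 → ℝ, f (v 0) * χ (WithLp.toLp 2 ![v 1, v 2]) = _
  rw [← hsplit]
  change ∫ q : ℝ × (Fin 2 → ℝ), f q.1 * χ (WithLp.toLp 2 ![q.2 0, q.2 1]) = _
  refine (integral_prod_mul (μ := volume) (ν := volume) f
    fun w : Fin 2 → ℝ => χ (WithLp.toLp 2 ![w 0, w 1])).trans ?_
  rw [← hE2]
  congr 2 with w
  congr
  ext i; fin_cases i <;> rfl

/-- The paper's source `f(η₁ - x₀) χ(η₂, η₃ + 1)`; coordinates of `η` are indexed from `0`. -/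
def source (f : ℝ → ℝ) (χ : EuclideanSpace ℝ (Fin 2) → ℝ) (x₀ : ℝ)
    (η : EuclideanSpace ℝ (Fin 3)) : ℝ :=
  f (η 0 - x₀) * χ ((WithLp.equiv 2 (Fin 2 → ℝ)).symm ![η 1, η 2 + 1])

section

variable {f : ℝ → ℝ} {χ : EuclideanSpace ℝ (Fin 2) → ℝ} {x₀ : ℝ}

theorem integral_source :
    ∫ η, source f χ x₀ η = (∫ z, f z) * ∫ y, χ y := by
  set c : EuclideanSpace ℝ (Fin 3) := WithLp.toLp 2 ![x₀, 0, -1]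
  set g : EuclideanSpace ℝ (Fin 3) → ℝ := fun ξ => f (ξ 0) * χ (WithLp.toLp 2 ![ξ 1, ξ 2])
  calc ∫ η, source f χ x₀ η = ∫ η, g (η - c) := by
        congr with η
        simp [source, g, c, sub_eq_add_neg]
    _ = ∫ η, g η := integral_sub_right_eq_self g c
    _ = _ := integral_euclideanSpace_fin_three_mul f χ

theorem continuous_source (hf : Continuous f) (hχ : Continuous χ) :
    Continuous (source f χ x₀) := by
  show Continuous fun η : EuclideanSpace ℝ (Fin 3) =>
    f (η 0 - x₀) * χ (WithLp.toLp 2 ![η 1, η 2 + 1])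
  fun_prop

theorem source_nonneg (hf : ∀ z, 0 ≤ f z) (hχ : ∀ y, 0 ≤ χ y) : 0 ≤ source f χ x₀ :=
  fun _ => mul_nonneg (hf _) (hχ _)

theorem norm_lt_three_of_near_source {η : EuclideanSpace ℝ (Fin 3)} (hx₀ : x₀ ∈ Set.Icc (0 : ℝ) 1)
    (h₀ : |η 0 - x₀| < 1 / 2)
    (h₁₂ : ‖(WithLp.equiv 2 (Fin 2 → ℝ)).symm ![η 1, η 2 + 1]‖ < 1 / 2) : ‖η‖ < 3 := by
  have h₁₂' : η 1 ^ 2 + (η 2 + 1) ^ 2 < (1 / 2) ^ 2 := by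
    have := pow_lt_pow_left₀ h₁₂ (norm_nonneg _) two_ne_zero
    simpa [EuclideanSpace.norm_sq_eq, Fin.sum_univ_two] using this
  obtain ⟨h₀l, h₀r⟩ := abs_lt.1 h₀
  have hη₀ : η 0 ^ 2 < 9 / 4 := by nlinarith [hx₀.1, hx₀.2]
  have hη₁ : η 1 ^ 2 < 1 / 4 := by nlinarith
  have hη₂ : η 2 ^ 2 < 9 / 4 := by nlinarith
  have : ‖η‖ ^ 2 < 3 ^ 2 := by
    rw [EuclideanSpace.norm_sq_eq, Fin.sum_univ_three]
    simp only [Real.norm_eq_abs, sq_abs]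
    linarith
  exact lt_of_pow_lt_pow_left₀ 2 (by norm_num) this

theorem dist_lt_four_of_source_ne_zero {ε : ℝ} (hε : ε ≤ 1 / 2)
    (hfsupp : ∀ z : ℝ, ε ≤ |z| → f z = 0)
    (hχsupp : ∀ y : EuclideanSpace ℝ (Fin 2), ε ≤ ‖y‖ → χ y = 0) (hx₀ : x₀ ∈ Set.Icc (0 : ℝ) 1)
    {x η : EuclideanSpace ℝ (Fin 3)} (hx : ‖x‖ ≤ 1) (hη : source f χ x₀ η ≠ 0) :
    dist x η < 4 := by
  have h₀ : |η 0 - x₀| < ε := lt_of_not_ge fun h => hη (by rw [source, hfsupp _ h, zero_mul])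
  have h₁₂ : ‖(WithLp.equiv 2 (Fin 2 → ℝ)).symm ![η 1, η 2 + 1]‖ < ε :=
    lt_of_not_ge fun h => hη (by rw [source, hχsupp _ h, mul_zero])
  calc dist x η ≤ ‖x‖ + ‖η‖ := dist_le_norm_add_norm x η
    _ < 1 + 3 :=
      add_lt_add_of_le_of_lt hx
        (norm_lt_three_of_near_source hx₀ (h₀.trans_le hε) (h₁₂.trans_le hε))
    _ = 4 := by norm_num

end

/-- Positivity of the first term of the Neumann series for the hyperbolic Cauchy
problem: for `x₀ ∈ [0,1]`, `|x| ≤ 1` and `t ≥ 4`,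
`u₀(x,t,x₀) = ∫_{|x−η|<t} f(η₁−x₀) χ(η₂, η₃+1) / (4π|x−η|) dη
  ≥ (1/(16π)) (∫f)(∫χ) > 0`,
and on the support of the integrand one has `|x − η| < 4 ≤ t`. -/
theorem stmt13 (ε : ℝ) (hε : ε ∈ Set.Ioc (0:ℝ) (1 / 2))
    (f : ℝ → ℝ) (χ : EuclideanSpace ℝ (Fin 2) → ℝ)
    (hfc : Continuous f) (hχc : Continuous χ)
    (hfnn : ∀ z : ℝ, 0 ≤ f z) (hχnn : ∀ y : EuclideanSpace ℝ (Fin 2), 0 ≤ χ y)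
    (hfsupp : ∀ z : ℝ, ε ≤ |z| → f z = 0)
    (hχsupp : ∀ y : EuclideanSpace ℝ (Fin 2), ε ≤ ‖y‖ → χ y = 0)
    (hpos : 0 < f 0 * χ 0) :
    (0 < ∫ z : ℝ, f z) ∧ (0 < ∫ y : EuclideanSpace ℝ (Fin 2), χ y) ∧
    ∀ x₀ ∈ Set.Icc (0:ℝ) 1, ∀ x : EuclideanSpace ℝ (Fin 3), ‖x‖ ≤ 1 →
      ∀ t : ℝ, 4 ≤ t →
      ((1 / (16 * π)) * (∫ z : ℝ, f z) * (∫ y : EuclideanSpace ℝ (Fin 2), χ y) ≤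
        ∫ η in {η : EuclideanSpace ℝ (Fin 3) | dist x η < t},
          f (η 0 - x₀) * χ ((WithLp.equiv 2 (Fin 2 → ℝ)).symm ![η 1, η 2 + 1]) /
            (4 * π * dist x η)) ∧
      ∀ η : EuclideanSpace ℝ (Fin 3),
        f (η 0 - x₀) * χ ((WithLp.equiv 2 (Fin 2 → ℝ)).symm ![η 1, η 2 + 1]) ≠ 0 →
        dist x η < 4 ∧ 4 ≤ t := by
  have hf0 : f 0 ≠ 0 := left_ne_zero_of_mul hpos.ne'
  have hχ0 : χ 0 ≠ 0 := right_ne_zero_of_mul hpos.ne'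
  refine ⟨hfc.integral_pos_of_hasCompactSupport_nonneg_nonzero
      (hasCompactSupport_of_forall_le_norm hfsupp) hfnn hf0,
    hχc.integral_pos_of_hasCompactSupport_nonneg_nonzero
      (hasCompactSupport_of_forall_le_norm hχsupp) hχnn hχ0, ?_⟩
  rintro x₀ hx₀ x hx t ht
  have hsupp : ∀ η, source f χ x₀ η ≠ 0 → dist x η < 4 := fun η =>
    dist_lt_four_of_source_ne_zero hε.2 hfsupp hχsupp hx₀ hx
  refine ⟨?_, fun η hη => ⟨hsupp η hη, ht⟩⟩
  have hcont : Continuous (source f χ x₀) := continuous_source hfc hχc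
  have hcpt : HasCompactSupport (source f χ x₀) :=
    HasCompactSupport.intro (isCompact_closedBall x 4) fun η hη =>
      not_not.1 fun h => hη (Metric.mem_closedBall_comm.1 (hsupp η h).le)
  have hint : Integrable fun η => source f χ x₀ η / (4 * π * dist x η) := by
    refine (((locallyIntegrable_inv_dist (by simp) x).integrable_smul_left_of_hasCompactSupport
      hcont hcpt).div_const (4 * π)).congr (ae_of_all _ fun η => ?_)
    simp only [smul_eq_mul]
    ring
  rw [setIntegral_eq_integral_of_forall_compl_eq_zero fun η hη => ?_]
  · calc 1 / (16 * π) * (∫ z, f z) * (∫ y, χ y)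
        = (∫ η, source f χ x₀ η) / (4 * π * 4) := by rw [integral_source]; ring
      _ ≤ ∫ η, source f χ x₀ η / (4 * π * dist x η) :=
        integral_div_le_integral_div_dist (by positivity) (source_nonneg hfnn hχnn) hsupp
          (hcont.integrable_of_hasCompactSupport hcpt) hint
  · by_contra h
    exact hη ((hsupp η (left_ne_zero_of_mul h)).trans_le ht)
end
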